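/- Let T be an ergodic, measure-preserving transformation of a probability space (X, m), let S be a finite state space with measurable transition functions f_i : X → S, and suppose there exists a measurable set A ⊆ X with m(A) > 0 such that A is transitive, i.e. for every i ∈ S and every x ∈ A the orbit (U_{i,n}(x))_{n≥0} visits every state in S at least once. Then the deterministic walk is transitive on S: for all i, j ∈ S, m({x ∈ X : U_{i,n}(x) = j for some n ≥ 1}) = 1. -/

import Mathlib

open MeasureTheory Set Filter

/-- The skew product `T_f (x, i) = (T x, f_i x)` driving a deterministic walk. -/
def detSkew {X S : Type*} (T : X → X) (f : S → X → S) : X × S → X × S :=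
  fun p => (T p.1, f p.2 p.1)

/-- The deterministic walk `U_{i,n}(x) = π₂ (T_f^n (x, i))`. -/
def detWalk {X S : Type*} (T : X → X) (f : S → X → S) (i : S) (n : ℕ) (x : X) : S :=
  ((detSkew T f)^[n] (x, i)).2

/-- The deterministic walk is transitive on `S` if for all `i j`, a.e. point
visits `j` at some positive time when started from `i`. -/
def WalkTransitive {X S : Type*} [MeasurableSpace X] (m : Measure X)
    (T : X → X) (f : S → X → S) : Prop :=
  ∀ i j : S, m {x | ∃ n, 1 ≤ n ∧ detWalk T f i n x = j} = 1

/-- A (non-singular) Markov transformation with Markov partition `P`. -/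
structure IsMarkovMap {Y : Type*} [MeasurableSpace Y] (μ : Measure Y) (R : Y → Y)
    (P : Set (Set Y)) : Prop where
  nonsingular : ∀ A : Set Y, MeasurableSet A → μ A = 0 → μ (R ⁻¹' A) = 0
  measurableSet : ∀ a ∈ P, MeasurableSet a
  pairwiseDisjoint : P.PairwiseDisjoint id
  sUnion_eq : ⋃₀ P = Set.univ
  image_sUnion : ∀ a ∈ P, ∃ Q ⊆ P, R '' a = ⋃₀ Q
  injOn : ∀ a ∈ P, Set.InjOn R a

/-- `a` communicates with `b`: a positive measure set of points of `a` visits `b`. -/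
def Communicates {Y : Type*} [MeasurableSpace Y] (μ : Measure Y) (R : Y → Y)
    (a b : Set Y) : Prop :=
  0 < μ {x | x ∈ a ∧ ∃ n, 1 ≤ n ∧ R^[n] x ∈ b}

/-- The communication class of `a` in the partition `P`. -/
def commClass {Y : Type*} [MeasurableSpace Y] (μ : Measure Y) (R : Y → Y)
    (P : Set (Set Y)) (a : Set Y) : Set (Set Y) :=
  {b ∈ P | Communicates μ R a b ∧ Communicates μ R b a}

/-- `C` is a communication class of the partition `P`. -/
def IsCommClass {Y : Type*} [MeasurableSpace Y] (μ : Measure Y) (R : Y → Y)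
    (P : Set (Set Y)) (C : Set (Set Y)) : Prop :=
  ∃ a ∈ P, C = commClass μ R P a

/-- `C` is a closed communication class of the partition `P`. -/
def IsClosedCommClass {Y : Type*} [MeasurableSpace Y] (μ : Measure Y) (R : Y → Y)
    (P : Set (Set Y)) (C : Set (Set Y)) : Prop :=
  IsCommClass μ R P C ∧ ∀ a ∈ C, ∀ b ∈ P, Communicates μ R a b → Communicates μ R b a

/-- The product partition `β̃ = β × S`. -/
def prodPartition {X : Type*} (S : Type*) (β : Set (Set X)) : Set (Set (X × S)) :=
  {c | ∃ a ∈ β, ∃ i : S, c = a ×ˢ ({i} : Set S)}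

/-- The measure `μ = (m / #S) × counting measure` on `X × S`. -/
noncomputable def fiberMeasure {X : Type*} (S : Type*) [MeasurableSpace X]
    [MeasurableSpace S] [Fintype S] (m : Measure X) : Measure (X × S) :=
  (Fintype.card S : ENNReal)⁻¹ • m.prod Measure.count

/-- The `n`-cylinder `[w 0, …, w (n-1)] = ⋂ j, R^{-j} (w j)`. -/
def cylinder {Y : Type*} (R : Y → Y) {n : ℕ} (w : Fin n → Set Y) : Set Y :=
  ⋂ j : Fin n, (R^[(j : ℕ)]) ⁻¹' w j

/-- The Strong Distortion Property: the Radon–Nikodym derivatives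
`v'_a = d(μ ∘ R^{-n})/dμ` on images of cylinders have a.e. bounded ratio. -/
def StrongDistortion {Y : Type*} [MeasurableSpace Y] (μ : Measure Y) (R : Y → Y)
    (P : Set (Set Y)) : Prop :=
  ∃ D : ENNReal, 1 ≤ D ∧ D ≠ ⊤ ∧
    ∀ n : ℕ, 1 ≤ n → ∀ w : Fin n → Set Y, (∀ j, w j ∈ P) →
      ∀ v : Y → ENNReal, Measurable v →
        (∀ B : Set Y, MeasurableSet B →
          ∫⁻ x in (R^[n] '' cylinder R w) ∩ B, v x ∂μ = μ (cylinder R w ∩ R^[n] ⁻¹' B)) →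
        ∀ᵐ x ∂μ.restrict (R^[n] '' cylinder R w),
          ∀ᵐ y ∂μ.restrict (R^[n] '' cylinder R w), v x / v y ≤ D

/-- The Finite Images property for a Markov map. -/
def FiniteImages {Y : Type*} (R : Y → Y) (P : Set (Set Y)) : Prop :=
  {s : Set Y | ∃ a ∈ P, s = R '' a}.Finite

/-- The partition `P` is irreducible under `R`: all elements intercommunicate. -/
def IrreduciblePartition {Y : Type*} [MeasurableSpace Y] (μ : Measure Y) (R : Y → Y)
    (P : Set (Set Y)) : Prop :=
  ∀ a ∈ P, ∀ b ∈ P, Communicates μ R a b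

/-!
Almost every point eventually enters the transitive set `A`: the points whose forward orbit
meets `A` form a backward-invariant set containing `T⁻¹ A`, so by ergodicity it has full
measure. Once the orbit is in `A`, the walk, from whatever state it has reached, visits every
state.
-/

theorem Ergodic.ae_exists_iterate_succ_mem {α : Type*} [MeasurableSpace α] {μ : Measure α}
    [IsFiniteMeasure μ] {g : α → α} (hg : Ergodic g μ) {s : Set α} (hs : MeasurableSet s)
    (hμs : μ s ≠ 0) : ∀ᵐ x ∂μ, ∃ n, g^[n + 1] x ∈ s := by
  set C := ⋃ n : ℕ, g^[n + 1] ⁻¹' s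
  have hC : MeasurableSet C := .iUnion fun n => hg.measurable.iterate (n + 1) hs
  have hgC : g ⁻¹' C ⊆ C := by
    intro x hx
    obtain ⟨n, hn⟩ := mem_iUnion.1 hx
    exact mem_iUnion.2 ⟨n + 1, by rwa [mem_preimage, Function.iterate_succ_apply]⟩
  rcases hg.ae_empty_or_univ_of_preimage_ae_le hC.nullMeasurableSet hgC.eventuallyLE
    with hCnull | hCfull
  · have hpre : g ⁻¹' s ⊆ C := subset_iUnion (fun k => g^[k + 1] ⁻¹' s) 0
    refine absurd ?_ hμs
    rw [← hg.measure_preimage hs.nullMeasurableSet]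
    exact measure_mono_null hpre (by simpa using measure_congr hCnull)
  · filter_upwards [show ∀ᵐ x ∂μ, x ∈ C from ae_eq_univ.1 hCfull] with x hx
    exact mem_iUnion.1 hx

theorem detSkew_iterate_fst {X S : Type*} (T : X → X) (f : S → X → S) (n : ℕ) (p : X × S) :
    ((detSkew T f)^[n] p).1 = T^[n] p.1 := by
  induction n generalizing p with
  | zero => rfl
  | succ n ih => exact ih (detSkew T f p)

theorem detWalk_add {X S : Type*} (T : X → X) (f : S → X → S) (i : S) (n k : ℕ) (x : X) :
    detWalk T f i (n + k) x = detWalk T f (detWalk T f i n x) k (T^[n] x) := by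
  have hpair : (detSkew T f)^[n] (x, i) = (T^[n] x, detWalk T f i n x) :=
    Prod.ext (detSkew_iterate_fst T f n (x, i)) rfl
  show ((detSkew T f)^[n + k] (x, i)).2 = _
  rw [add_comm, Function.iterate_add_apply, hpair]
  rfl

theorem stmt_13_general {X S : Type*} [MeasurableSpace X]
    (m : Measure X) [IsProbabilityMeasure m]
    (T : X → X) (hTerg : Ergodic T m)
    (f : S → X → S)
    (A : Set X) (hA : MeasurableSet A) (hApos : 0 < m A)
    (htrans : ∀ i : S, ∀ x ∈ A, ∀ j : S, ∃ n : ℕ, detWalk T f i n x = j) :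
    WalkTransitive m T f := by
  intro i j
  have hvisit : ∀ᵐ x ∂m, ∃ n, 1 ≤ n ∧ detWalk T f i n x = j := by
    filter_upwards [hTerg.ae_exists_iterate_succ_mem hA hApos.ne'] with x ⟨n, hn⟩
    obtain ⟨k, hk⟩ := htrans (detWalk T f i (n + 1) x) _ hn j
    exact ⟨n + 1 + k, by omega, by rw [detWalk_add, hk]⟩
  rw [measure_congr (ae_eq_univ.2 hvisit), measure_univ]

/-- If `T` is ergodic and measure preserving and there is a transitive set
`A` of positive measure, then the deterministic walk is transitive on the finite state
space `S`. -/
theorem stmt_13 {X S : Type*} [MeasurableSpace X] [MeasurableSpace S]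
    [MeasurableSingletonClass S] [Fintype S]
    (m : Measure X) [IsProbabilityMeasure m]
    (T : X → X) (hT : MeasurePreserving T m m) (hTerg : Ergodic T m)
    (f : S → X → S) (hf : ∀ i, Measurable (f i))
    (A : Set X) (hA : MeasurableSet A) (hApos : 0 < m A)
    (htrans : ∀ i : S, ∀ x ∈ A, ∀ j : S, ∃ n : ℕ, detWalk T f i n x = j) :
    WalkTransitive m T f :=
  stmt_13_general m T hTerg f A hA hApos htrans
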